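/- arXiv:2201.01836 — 5 statements merged into one kernel-verified Lean document; each statement's English description precedes it below -/
import Mathlib

section
/- Let r : ℕ → ℝ and v : ℕ → ℝ be bounded sequences, let γ ∈ [0,1) and λ ∈ [0,1). Then the doubly-infinite λ-return sum can be regrouped as follows: (1−λ) · ∑_{n=1}^∞ λ^{n−1} · ( (∑_{k=1}^{n} γ^{k−1} · r k) + γ^n · v n ) = r 1 + γ · ∑_{n=1}^∞ (λγ)^{n−1} · ( (1−λ) · v n + λ · r (n+1) ), where both series converge absolutely. -/
/-!
Writing `R k = (λγ)^k r (k+1)`, the discounted partial return satisfies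
`λ^n ∑_{k ≤ n} γ^k r (k+1) = ∑_{k ≤ n} R k λ^(n-k)`, a Cauchy product of `R` with the geometric
series in `λ`. Its sum is therefore `(∑ R) / (1 - λ)`, so the weight `1 - λ` cancels, and
`∑ R = r 1 + λγ ∑ (λγ)^n r (n+2)` then regroups with the value terms `γ (λγ)^n v (n+1)`.
-/

open Finset

theorem pow_mul_sum_range_pow_mul {R : Type*} [CommSemiring R] (a b : R) (f : ℕ → R) (n : ℕ) :
    a ^ n * ∑ k ∈ range (n + 1), b ^ k * f k
      = ∑ k ∈ range (n + 1), (a * b) ^ k * f k * a ^ (n - k) := by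
  rw [mul_sum]
  refine sum_congr rfl fun k hk => ?_
  rw [← pow_mul_pow_sub a (Nat.lt_succ_iff.mp (mem_range.mp hk)), mul_pow]
  ring

section NormedField

variable {𝕜 : Type*} [NormedField 𝕜] {q : 𝕜}

theorem summable_norm_pow_mul_of_norm_le (hq : ‖q‖ < 1) {f : ℕ → 𝕜} {C : ℝ}
    (hf : ∀ n, ‖f n‖ ≤ C) : Summable fun n => ‖q ^ n * f n‖ := by
  refine ((summable_geometric_of_lt_one (norm_nonneg q) hq).mul_right C).of_nonneg_of_le
    (fun n => norm_nonneg _) fun n => ?_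
  rw [norm_mul, norm_pow]
  exact mul_le_mul_of_nonneg_left (hf n) (pow_nonneg (norm_nonneg q) n)

theorem hasSum_sum_range_mul_geometric [CompleteSpace 𝕜] (hq : ‖q‖ < 1) {b : ℕ → 𝕜}
    (hb : Summable fun n => ‖b n‖) :
    HasSum (fun n => ∑ k ∈ range (n + 1), b k * q ^ (n - k)) ((∑' n, b n) * (1 - q)⁻¹) := by
  simpa only [tsum_geometric_of_norm_lt_one hq] using
    hasSum_sum_range_mul_of_summable_norm hb (summable_norm_geometric_of_norm_lt_one hq)

end NormedField

/-- The forward-view λ-return regrouping identity. Here `r k` plays the role of the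
reward `R_{t+k}` and `v n` of the value estimate `v_θ(S_{t+n})`. We index the infinite
sums over `n : ℕ` starting at `0`, corresponding to the paper's index `n+1 ≥ 1`. -/
theorem lambda_return_regrouping (r v : ℕ → ℝ) (γ lam : ℝ)
    (hr : ∃ C, ∀ n, |r n| ≤ C) (hv : ∃ C, ∀ n, |v n| ≤ C)
    (hγ0 : 0 ≤ γ) (hγ1 : γ < 1) (hl0 : 0 ≤ lam) (hl1 : lam < 1) :
    Summable (fun n : ℕ => |lam ^ n *
        ((∑ k ∈ Finset.range (n + 1), γ ^ k * r (k + 1)) + γ ^ (n + 1) * v (n + 1))|) ∧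
    Summable (fun n : ℕ => |(lam * γ) ^ n * ((1 - lam) * v (n + 1) + lam * r (n + 2))|) ∧
    (1 - lam) * (∑' n : ℕ, lam ^ n *
        ((∑ k ∈ Finset.range (n + 1), γ ^ k * r (k + 1)) + γ ^ (n + 1) * v (n + 1)))
      = r 1 + γ * ∑' n : ℕ, (lam * γ) ^ n * ((1 - lam) * v (n + 1) + lam * r (n + 2)) := by
  obtain ⟨Cr, hCr⟩ := hr
  obtain ⟨Cv, hCv⟩ := hv
  have hlam : ‖lam‖ < 1 := by rwa [Real.norm_of_nonneg hl0]
  have hlg : ‖lam * γ‖ < 1 := by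
    rw [Real.norm_of_nonneg (mul_nonneg hl0 hγ0)]
    exact (mul_le_of_le_one_right hl0 hγ1.le).trans_lt hl1
  have hR := summable_norm_pow_mul_of_norm_le hlg fun n => hCr (n + 1)
  have hR' := (summable_norm_pow_mul_of_norm_le hlg fun n => hCr (n + 2)).of_norm.hasSum
  have hV := (summable_norm_pow_mul_of_norm_le hlg fun n => hCv (n + 1)).of_norm.hasSum
  have hRtail : HasSum (fun n => (lam * γ) ^ (n + 1) * r (n + 1 + 1))
      (lam * γ * ∑' n, (lam * γ) ^ n * r (n + 2)) :=
    (hR'.mul_left (lam * γ)).congr_fun fun n => by ring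
  have hLHS : HasSum (fun n => lam ^ n *
      ((∑ k ∈ range (n + 1), γ ^ k * r (k + 1)) + γ ^ (n + 1) * v (n + 1))) _ :=
    ((hasSum_sum_range_mul_geometric hlam hR).add (hV.mul_left γ)).congr_fun
      fun n => by rw [mul_add, pow_mul_sum_range_pow_mul]; ring
  have hRHS : HasSum (fun n => (lam * γ) ^ n * ((1 - lam) * v (n + 1) + lam * r (n + 2))) _ :=
    ((hV.mul_left (1 - lam)).add (hR'.mul_left lam)).congr_fun fun n => by ring
  refine ⟨hLHS.summable.abs, hRHS.summable.abs, ?_⟩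
  rw [hLHS.tsum_eq, hRHS.tsum_eq, hRtail.zero_add.tsum_eq]
  field_simp [(sub_pos.mpr hl1).ne']
  ring
end

section
/- Let S d : ℕ, Φ : Matrix (Fin S) (Fin d) ℝ, D P : Matrix (Fin S) (Fin S) ℝ, R : Fin S → ℝ, γ ∈ ℝ. Set A = Φᵀ * D * Φ and B = Φᵀ * D * P * Φ. Assume A is invertible and A − γ•B is invertible. If θ : Fin d → ℝ satisfies A⁻¹ *ᵥ ( Φᵀ * D *ᵥ (R + γ • (P * Φ) *ᵥ θ) ) = θ, then θ = (A − γ•B)⁻¹ *ᵥ (Φᵀ * D *ᵥ R); that is, the projected Bellman equation has the TD fixed point θ_TD as its unique solution. -/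
open Matrix

namespace Matrix

variable {n s K : Type*} [Fintype n] [Fintype s] [CommRing K]

theorem inv_mulVec_eq_iff_eq_mulVec [DecidableEq n] {A : Matrix n n K} (hA : IsUnit A)
    {u v : n → K} : A⁻¹ *ᵥ u = v ↔ u = A *ᵥ v := by
  let _ := hA.invertible
  exact ⟨fun h => by rw [← h, mulVec_mulVec, mul_inv_of_invertible, one_mulVec],
    inv_mulVec_eq_vec⟩

theorem sub_smul_mulVec_eq_of_projected_bellman {Φ : Matrix s n K} {D P : Matrix s s K}
    {R : s → K} {γ : K} {A : Matrix n n K} {θ : n → K}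
    (h : A *ᵥ θ = (Φᵀ * D) *ᵥ (R + γ • ((P * Φ) *ᵥ θ))) :
    (A - γ • (Φᵀ * D * P * Φ)) *ᵥ θ = (Φᵀ * D) *ᵥ R := by
  have hB : (Φᵀ * D * P * Φ) *ᵥ θ = (Φᵀ * D) *ᵥ ((P * Φ) *ᵥ θ) := by
    simp only [mulVec_mulVec, Matrix.mul_assoc]
  rw [sub_mulVec, h, mulVec_add, mulVec_smul, smul_mulVec, hB, add_sub_cancel_right]

end Matrix

theorem projected_bellman_unique_solution_general (S d : ℕ)
    (Φ : Matrix (Fin S) (Fin d) ℝ) (D P : Matrix (Fin S) (Fin S) ℝ)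
    (R : Fin S → ℝ) (γ : ℝ)
    (A B : Matrix (Fin d) (Fin d) ℝ)
    (hB : B = Φᵀ * D * P * Φ)
    (hAinv : IsUnit A) (hABinv : IsUnit (A - γ • B))
    (θ : Fin d → ℝ)
    (hθ : A⁻¹ *ᵥ ((Φᵀ * D) *ᵥ (R + γ • ((P * Φ) *ᵥ θ))) = θ) :
    θ = (A - γ • B)⁻¹ *ᵥ ((Φᵀ * D) *ᵥ R) := by
  subst hB
  have hBellman := sub_smul_mulVec_eq_of_projected_bellman
    ((inv_mulVec_eq_iff_eq_mulVec hAinv).mp hθ).symm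
  exact ((inv_mulVec_eq_iff_eq_mulVec hABinv).mpr hBellman.symm).symm

/-- Any solution of the projected Bellman fixed-point equation equals the TD fixed
point `θ_TD = (A - γB)⁻¹ ΦᵀDR`; i.e. the equation has a unique solution. -/
theorem projected_bellman_unique_solution (S d : ℕ)
    (Φ : Matrix (Fin S) (Fin d) ℝ) (D P : Matrix (Fin S) (Fin S) ℝ)
    (R : Fin S → ℝ) (γ : ℝ)
    (A B : Matrix (Fin d) (Fin d) ℝ)
    (hA : A = Φᵀ * D * Φ) (hB : B = Φᵀ * D * P * Φ)
    (hAinv : IsUnit A) (hABinv : IsUnit (A - γ • B))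
    (θ : Fin d → ℝ)
    (hθ : A⁻¹ *ᵥ ((Φᵀ * D) *ᵥ (R + γ • ((P * Φ) *ᵥ θ))) = θ) :
    θ = (A - γ • B)⁻¹ *ᵥ ((Φᵀ * D) *ᵥ R) :=
  projected_bellman_unique_solution_general S d Φ D P R γ A B hB hAinv hABinv θ hθ
end

section
/- Let S d : ℕ, Φ : Matrix (Fin S) (Fin d) ℝ, D P : Matrix (Fin S) (Fin S) ℝ, R : Fin S → ℝ, γ η ∈ ℝ. Set A = Φᵀ * D * Φ and B = Φᵀ * D * P * Φ. Assume A, A − γ•B, and A − (η*γ)•B are all invertible. Define θ_TD = (A − γ•B)⁻¹ *ᵥ (Φᵀ * D *ᵥ R), ŵ = A⁻¹ *ᵥ (Φᵀ * D *ᵥ R), and Ξ_TD^η = (A − (η*γ)•B)⁻¹ * A. Then (Ξ_TD^η)⁻¹ *ᵥ θ_TD = (1−η) • θ_TD + η • ŵ. -/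
open Matrix

namespace Matrix

variable {n R : Type*} [Fintype n] [DecidableEq n] [CommRing R]

theorem inv_inv_mul_mulVec {K : Matrix n n R} (hK : IsUnit K) (A : Matrix n n R) (v : n → R) :
    (K⁻¹ * A)⁻¹ *ᵥ v = A⁻¹ *ᵥ (K *ᵥ v) := by
  rw [mul_inv_rev, nonsing_inv_nonsing_inv _ (K.isUnit_iff_isUnit_det.mp hK), mulVec_mulVec]

theorem inv_mulVec_lineMap_mulVec_inv_mulVec {A C : Matrix n n R} (hA : IsUnit A)
    (hC : IsUnit C) (t : R) (r : n → R) :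
    A⁻¹ *ᵥ (((1 - t) • A + t • C) *ᵥ (C⁻¹ *ᵥ r)) = (1 - t) • (C⁻¹ *ᵥ r) + t • (A⁻¹ *ᵥ r) := by
  have hCC : C *ᵥ (C⁻¹ *ᵥ r) = r := by
    rw [mulVec_mulVec, mul_nonsing_inv _ (C.isUnit_iff_isUnit_det.mp hC), one_mulVec]
  have hAA : A⁻¹ *ᵥ (A *ᵥ (C⁻¹ *ᵥ r)) = C⁻¹ *ᵥ r := by
    rw [mulVec_mulVec, nonsing_inv_mul _ (A.isUnit_iff_isUnit_det.mp hA), one_mulVec]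
  rw [add_mulVec, smul_mulVec, smul_mulVec, hCC, mulVec_add, mulVec_smul, mulVec_smul, hAA]

end Matrix

theorem eta_sf_inverse_mixture_identity_general (S d : ℕ)
    (Φ : Matrix (Fin S) (Fin d) ℝ) (D : Matrix (Fin S) (Fin S) ℝ)
    (R : Fin S → ℝ) (γ η : ℝ)
    (A B : Matrix (Fin d) (Fin d) ℝ)
    (hAinv : IsUnit A) (hγBinv : IsUnit (A - γ • B)) (hηγBinv : IsUnit (A - (η * γ) • B))
    (θTD w : Fin d → ℝ)
    (hθ : θTD = (A - γ • B)⁻¹ *ᵥ ((Φᵀ * D) *ᵥ R))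
    (hw : w = A⁻¹ *ᵥ ((Φᵀ * D) *ᵥ R))
    (ΞTDη : Matrix (Fin d) (Fin d) ℝ) (hΞ : ΞTDη = (A - (η * γ) • B)⁻¹ * A) :
    ΞTDη⁻¹ *ᵥ θTD = (1 - η) • θTD + η • w := by
  have hmix : A - (η * γ) • B = (1 - η) • A + η • (A - γ • B) := by module
  rw [hΞ, inv_inv_mul_mulVec hηγBinv, hmix, hθ, hw,
    inv_mulVec_lineMap_mulVec_inv_mulVec hAinv hγBinv]

/-- Applying the inverse of the ηγ-discounted SF fixed point to the TD fixed point
yields the mixture `(1-η) • θ_TD + η • ŵ`. -/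
theorem eta_sf_inverse_mixture_identity (S d : ℕ)
    (Φ : Matrix (Fin S) (Fin d) ℝ) (D P : Matrix (Fin S) (Fin S) ℝ)
    (R : Fin S → ℝ) (γ η : ℝ)
    (A B : Matrix (Fin d) (Fin d) ℝ)
    (hA : A = Φᵀ * D * Φ) (hB : B = Φᵀ * D * P * Φ)
    (hAinv : IsUnit A) (hγBinv : IsUnit (A - γ • B)) (hηγBinv : IsUnit (A - (η * γ) • B))
    (θTD w : Fin d → ℝ)
    (hθ : θTD = (A - γ • B)⁻¹ *ᵥ ((Φᵀ * D) *ᵥ R))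
    (hw : w = A⁻¹ *ᵥ ((Φᵀ * D) *ᵥ R))
    (ΞTDη : Matrix (Fin d) (Fin d) ℝ) (hΞ : ΞTDη = (A - (η * γ) • B)⁻¹ * A) :
    ΞTDη⁻¹ *ᵥ θTD = (1 - η) • θTD + η • w :=
  eta_sf_inverse_mixture_identity_general S d Φ D R γ η A B hAinv hγBinv hηγBinv θTD w hθ hw ΞTDη hΞ
end

section
/- Let S d : ℕ, Φ : Matrix (Fin S) (Fin d) ℝ, D P : Matrix (Fin S) (Fin S) ℝ, R : Fin S → ℝ, γ η ∈ ℝ. Set A = Φᵀ * D * Φ and B = Φᵀ * D * P * Φ. Assume A, A − γ•B, and A − (η*γ)•B are all invertible. Define θ_TD = (A − γ•B)⁻¹ *ᵥ (Φᵀ * D *ᵥ R), θ_TD^η = (A − (η*γ)•B)⁻¹ *ᵥ (Φᵀ * D *ᵥ R), and Ξ_TD^η = (A − (η*γ)•B)⁻¹ * A. Then (Ξ_TD^η)⁻¹ *ᵥ θ_TD = (1−η) • θ_TD + η • ((Ξ_TD^η)⁻¹ *ᵥ θ_TD^η). -/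
open Matrix

/-!
Since `A - ηγ B = (1 - η) A + η (A - γ B)`, the resolvent identity
`A⁻¹ ((1 - η) A + η M) M⁻¹ = (1 - η) M⁻¹ + η A⁻¹` with `M = A - γ B`, applied to `ΦᵀDR`,
splits `(Ξ_TD^η)⁻¹ θ_TD = A⁻¹ (A - ηγ B) θ_TD` into `(1 - η) θ_TD + η A⁻¹ ΦᵀDR`,
and `A⁻¹ ΦᵀDR` is exactly `(Ξ_TD^η)⁻¹ θ_TD^η`.
-/

namespace Matrix

variable {n α : Type*} [Fintype n] [DecidableEq n] [CommRing α]

theorem nonsing_inv_mul_smul_add_smul_mul_nonsing_inv {A M : Matrix n n α}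
    (hA : IsUnit A.det) (hM : IsUnit M.det) (s t : α) :
    A⁻¹ * (s • A + t • M) * M⁻¹ = s • M⁻¹ + t • A⁻¹ := by
  rw [Matrix.mul_add, Matrix.add_mul, Matrix.mul_smul, Matrix.mul_smul, Matrix.smul_mul,
    Matrix.smul_mul, nonsing_inv_mul _ hA, Matrix.one_mul, mul_nonsing_inv_cancel_right _ _ hM]

end Matrix

theorem eta_sf_inverse_td_identity_general (S d : ℕ)
    (Φ : Matrix (Fin S) (Fin d) ℝ) (D : Matrix (Fin S) (Fin S) ℝ)
    (R : Fin S → ℝ) (γ η : ℝ)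
    (A B : Matrix (Fin d) (Fin d) ℝ)
    (hAinv : IsUnit A) (hγBinv : IsUnit (A - γ • B)) (hηγBinv : IsUnit (A - (η * γ) • B))
    (θTD θTDη : Fin d → ℝ)
    (hθ : θTD = (A - γ • B)⁻¹ *ᵥ ((Φᵀ * D) *ᵥ R))
    (hθη : θTDη = (A - (η * γ) • B)⁻¹ *ᵥ ((Φᵀ * D) *ᵥ R))
    (ΞTDη : Matrix (Fin d) (Fin d) ℝ) (hΞ : ΞTDη = (A - (η * γ) • B)⁻¹ * A) :
    ΞTDη⁻¹ *ᵥ θTD = (1 - η) • θTD + η • (ΞTDη⁻¹ *ᵥ θTDη) := by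
  have hAdet := (isUnit_iff_isUnit_det A).mp hAinv
  have hγdet := (isUnit_iff_isUnit_det _).mp hγBinv
  have hηγdet := (isUnit_iff_isUnit_det _).mp hηγBinv
  have hΞinv : ΞTDη⁻¹ = A⁻¹ * (A - (η * γ) • B) := by
    rw [hΞ, Matrix.mul_inv_rev, nonsing_inv_nonsing_inv _ hηγdet]
  have hsplit : A - (η * γ) • B = (1 - η) • A + η • (A - γ • B) := by module
  have hθη_image : ΞTDη⁻¹ *ᵥ θTDη = A⁻¹ *ᵥ ((Φᵀ * D) *ᵥ R) := by
    rw [hΞinv, hθη, mulVec_mulVec, mul_nonsing_inv_cancel_right _ _ hηγdet]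
  calc ΞTDη⁻¹ *ᵥ θTD
      = (A⁻¹ * ((1 - η) • A + η • (A - γ • B)) * (A - γ • B)⁻¹) *ᵥ ((Φᵀ * D) *ᵥ R) := by
        rw [hΞinv, hθ, mulVec_mulVec, hsplit]
    _ = ((1 - η) • (A - γ • B)⁻¹ + η • A⁻¹) *ᵥ ((Φᵀ * D) *ᵥ R) := by
        rw [nonsing_inv_mul_smul_add_smul_mul_nonsing_inv hAdet hγdet]
    _ = (1 - η) • θTD + η • (ΞTDη⁻¹ *ᵥ θTDη) := by
        rw [add_mulVec, smul_mulVec, smul_mulVec, hθη_image, hθ]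

/-- Lemma B.2 of the paper: the key identity relating the TD fixed point, the
ηγ-discounted TD fixed point and the ηγ-discounted SF fixed point:
`(Ξ_TD^η)⁻¹ θ_TD = (1-η) • θ_TD + η • ((Ξ_TD^η)⁻¹ θ_TD^η)`. -/
theorem eta_sf_inverse_td_identity (S d : ℕ)
    (Φ : Matrix (Fin S) (Fin d) ℝ) (D P : Matrix (Fin S) (Fin S) ℝ)
    (R : Fin S → ℝ) (γ η : ℝ)
    (A B : Matrix (Fin d) (Fin d) ℝ)
    (hA : A = Φᵀ * D * Φ) (hB : B = Φᵀ * D * P * Φ)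
    (hAinv : IsUnit A) (hγBinv : IsUnit (A - γ • B)) (hηγBinv : IsUnit (A - (η * γ) • B))
    (θTD θTDη : Fin d → ℝ)
    (hθ : θTD = (A - γ • B)⁻¹ *ᵥ ((Φᵀ * D) *ᵥ R))
    (hθη : θTDη = (A - (η * γ) • B)⁻¹ *ᵥ ((Φᵀ * D) *ᵥ R))
    (ΞTDη : Matrix (Fin d) (Fin d) ℝ) (hΞ : ΞTDη = (A - (η * γ) • B)⁻¹ * A) :
    ΞTDη⁻¹ *ᵥ θTD = (1 - η) • θTD + η • (ΞTDη⁻¹ *ᵥ θTDη) :=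
  eta_sf_inverse_td_identity_general S d Φ D R γ η A B hAinv hγBinv hηγBinv θTD θTDη hθ hθη ΞTDη hΞ
end

section
/- Let S d : ℕ, Φ : Matrix (Fin S) (Fin d) ℝ, D P : Matrix (Fin S) (Fin S) ℝ, R : Fin S → ℝ, γ η ∈ ℝ. Set A = Φᵀ * D * Φ and B = Φᵀ * D * P * Φ. Assume A, A − γ•B, and A − (η*γ)•B are all invertible. Define θ_TD = (A − γ•B)⁻¹ *ᵥ (Φᵀ * D *ᵥ R), ŵ = A⁻¹ *ᵥ (Φᵀ * D *ᵥ R), and Ξ_TD^η = (A − (η*γ)•B)⁻¹ * A. Then θ_TD satisfies the projected fixed-point equation of one-step value learning with the η-return mixture target: A⁻¹ *ᵥ ( Φᵀ * D *ᵥ ( R + γ • ((P * Φ) *ᵥ ( (1−η) • (Ξ_TD^η *ᵥ θ_TD) + η • (Ξ_TD^η *ᵥ ŵ) )) ) ) = θ_TD. -/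
/-!
Write `c = ΦᵀDR`, so that `(A - γB) θ_TD = c` and `A ŵ = c`. Then
`(1 - η) A θ_TD + η A ŵ = (1 - η) A θ_TD + η (A - γB) θ_TD = (A - ηγB) θ_TD`,
so the mixed successor-feature prediction `Ξ_TD^η ((1 - η) θ_TD + η ŵ)` is `θ_TD` itself.
The η-return target therefore collapses to the one-step TD target, whose projected fixed
point is `θ_TD`: `A⁻¹ (c + γ B θ_TD) = θ_TD` because `A θ_TD = c + γ B θ_TD`.
-/

open Matrix

namespace Matrix

variable {n K : Type*} [Fintype n] [DecidableEq n] [CommRing K]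

theorem mulVec_nonsing_inv_mulVec {M : Matrix n n K} (hM : IsUnit M) (v : n → K) :
    M *ᵥ (M⁻¹ *ᵥ v) = v := by
  rw [mulVec_mulVec, mul_nonsing_inv _ ((isUnit_iff_isUnit_det M).mp hM), one_mulVec]

theorem nonsing_inv_mulVec_eq_of_mulVec_eq {M : Matrix n n K} (hM : IsUnit M) {u v : n → K}
    (h : M *ᵥ v = u) : M⁻¹ *ᵥ u = v := by
  rw [← h, mulVec_mulVec, nonsing_inv_mul _ ((isUnit_iff_isUnit_det M).mp hM), one_mulVec]

end Matrix

section TDFixedPoint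

variable {n K : Type*} [Fintype n] [DecidableEq n] [CommRing K]
  {A B : Matrix n n K} {γ η : K} {c θ w : n → K}

theorem td_fixed_point_of_sub_smul_mulVec_eq (hA : IsUnit A) (hθ : (A - γ • B) *ᵥ θ = c) :
    A⁻¹ *ᵥ (c + γ • (B *ᵥ θ)) = θ :=
  nonsing_inv_mulVec_eq_of_mulVec_eq hA <| by rw [← hθ, sub_mulVec, smul_mulVec]; abel

theorem successor_features_mulVec_mixture_eq (hηγ : IsUnit (A - (η * γ) • B))
    (hθ : (A - γ • B) *ᵥ θ = c) (hw : A *ᵥ w = c) :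
    (1 - η) • (((A - (η * γ) • B)⁻¹ * A) *ᵥ θ) + η • (((A - (η * γ) • B)⁻¹ * A) *ᵥ w) = θ := by
  have hmix : A *ᵥ ((1 - η) • θ + η • w) = (A - (η * γ) • B) *ᵥ θ := by
    rw [mulVec_add, mulVec_smul, mulVec_smul, hw, ← hθ]
    simp only [sub_mulVec, smul_mulVec]
    module
  rw [← mulVec_smul, ← mulVec_smul, ← mulVec_add, ← mulVec_mulVec, hmix]
  exact nonsing_inv_mulVec_eq_of_mulVec_eq hηγ rfl

end TDFixedPoint

theorem eta_return_mixture_has_td_fixed_point_general (S d : ℕ)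
    (Φ : Matrix (Fin S) (Fin d) ℝ) (D P : Matrix (Fin S) (Fin S) ℝ)
    (R : Fin S → ℝ) (γ η : ℝ)
    (A B : Matrix (Fin d) (Fin d) ℝ)
    (hB : B = Φᵀ * D * P * Φ)
    (hAinv : IsUnit A) (hγBinv : IsUnit (A - γ • B)) (hηγBinv : IsUnit (A - (η * γ) • B))
    (θTD w : Fin d → ℝ)
    (hθ : θTD = (A - γ • B)⁻¹ *ᵥ ((Φᵀ * D) *ᵥ R))
    (hw : w = A⁻¹ *ᵥ ((Φᵀ * D) *ᵥ R))
    (ΞTDη : Matrix (Fin d) (Fin d) ℝ) (hΞ : ΞTDη = (A - (η * γ) • B)⁻¹ * A) :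
    A⁻¹ *ᵥ ((Φᵀ * D) *ᵥ (R + γ • ((P * Φ) *ᵥ
        ((1 - η) • (ΞTDη *ᵥ θTD) + η • (ΞTDη *ᵥ w))))) = θTD := by
  have hθc : (A - γ • B) *ᵥ θTD = (Φᵀ * D) *ᵥ R := hθ ▸ mulVec_nonsing_inv_mulVec hγBinv _
  have hwc : A *ᵥ w = (Φᵀ * D) *ᵥ R := hw ▸ mulVec_nonsing_inv_mulVec hAinv _
  have hBθ : (Φᵀ * D) *ᵥ ((P * Φ) *ᵥ θTD) = B *ᵥ θTD := by
    rw [mulVec_mulVec, hB, Matrix.mul_assoc, Matrix.mul_assoc, Matrix.mul_assoc]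
  rw [hΞ, successor_features_mulVec_mixture_eq hηγBinv hθc hwc, mulVec_add, mulVec_smul, hBθ]
  exact td_fixed_point_of_sub_smul_mulVec_eq hAinv hθc

/-- Proposition 1 of the paper: with the SF parameters at their ηγ-discounted fixed
point `Ξ_TD^η` and the reward parameters at the regression solution `ŵ`, the TD fixed
point `θ_TD` satisfies the projected fixed-point equation of one-step value learning
with the η-return mixture target. -/
theorem eta_return_mixture_has_td_fixed_point (S d : ℕ)
    (Φ : Matrix (Fin S) (Fin d) ℝ) (D P : Matrix (Fin S) (Fin S) ℝ)
    (R : Fin S → ℝ) (γ η : ℝ)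
    (A B : Matrix (Fin d) (Fin d) ℝ)
    (hA : A = Φᵀ * D * Φ) (hB : B = Φᵀ * D * P * Φ)
    (hAinv : IsUnit A) (hγBinv : IsUnit (A - γ • B)) (hηγBinv : IsUnit (A - (η * γ) • B))
    (θTD w : Fin d → ℝ)
    (hθ : θTD = (A - γ • B)⁻¹ *ᵥ ((Φᵀ * D) *ᵥ R))
    (hw : w = A⁻¹ *ᵥ ((Φᵀ * D) *ᵥ R))
    (ΞTDη : Matrix (Fin d) (Fin d) ℝ) (hΞ : ΞTDη = (A - (η * γ) • B)⁻¹ * A) :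
    A⁻¹ *ᵥ ((Φᵀ * D) *ᵥ (R + γ • ((P * Φ) *ᵥ
        ((1 - η) • (ΞTDη *ᵥ θTD) + η • (ΞTDη *ᵥ w))))) = θTD :=
  eta_return_mixture_has_td_fixed_point_general S d Φ D P R γ η A B hB hAinv hγBinv hηγBinv θTD w hθ
    hw ΞTDη hΞ
end
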